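/- For any r ≥ 2 and any tuples x̃_1 ∈ ℕ^{m_1}, …, x̃_r ∈ ℕ^{m_r} of positive integers, the Gauss measure of cylinders satisfies (log 2)^{r−1} ≤ μ(I(x̃_1 ⌢ ⋯ ⌢ x̃_r)) / (μ(I(x̃_1)) ⋯ μ(I(x̃_r))) ≤ (2·log 2)^{r−1}, where x̃_1 ⌢ ⋯ ⌢ x̃_r denotes the concatenation of the tuples. -/

import Mathlib

open MeasureTheory Filter

/-- The Gauss map `T(x) = 1/x mod 1`. -/
noncomputable def gaussMap (x : ℝ) : ℝ := Int.fract (1 / x)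

/-- The `n`-th partial quotient (indexed from `0`): `a_{n+1}(ω) = ⌊1 / T^n(ω)⌋`. -/
noncomputable def cfDigit (n : ℕ) (ω : ℝ) : ℕ := ⌊1 / (gaussMap^[n] ω)⌋₊

/-- The Gauss measure on `(0,1)`, with density `1/((log 2)(1+t))` w.r.t. Lebesgue. -/
noncomputable def gaussMeasure : Measure ℝ :=
  (volume.restrict (Set.Ioo (0 : ℝ) 1)).withDensity
    (fun t => ENNReal.ofReal (1 / (Real.log 2 * (1 + t))))

/-- The cylinder `I(a_1, …, a_n)`: irrationals in `(0,1)` whose continued fraction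
expansion begins with `a_1, …, a_n`. -/
def cylinder (n : ℕ) (a : Fin n → ℕ) : Set ℝ :=
  {ω | ω ∈ Set.Ioo (0 : ℝ) 1 ∧ Irrational ω ∧ ∀ i : Fin n, cfDigit i ω = a i}

/-- The cylinder determined by a list of partial quotients. -/
def cylinderL (l : List ℕ) : Set ℝ :=
  {ω | ω ∈ Set.Ioo (0 : ℝ) 1 ∧ Irrational ω ∧
    ∀ i : Fin l.length, cfDigit i ω = l.get i}

/-!
For a block `l` of partial quotients with convergents `p_n / q_n`, the cylinder `I(l ⌢ y)` is the
image of `I(y)` under `t ↦ (p_n + p_{n-1} t) / (q_n + q_{n-1} t)`, whose derivative is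
`±1 / Q(t)²` with `Q(t) = q_n + q_{n-1} t`. Changing variables,
`μ(I(l ⌢ y)) = ∫_{I(y)} dt / (log 2 · Q(t) R(t))` with `R(t) = Q(t) + p_n + p_{n-1} t`.
For `y = []` this says `log 2 · μ(I(l)) = ∫₀¹ dt / (Q R) = L`, the slope of `log` between
`Q(1) R(0)` and `Q(0) R(1)`; so `L` lies between the reciprocals of these two numbers, while on
`[0, 1]` the product `Q R` is at most the smaller one times `1 + t` and at least half the larger one
times `1 + t`. Hence the integrand is between `L` and `2 L` times the Gauss density, and integrating
over `I(y)` gives `log 2 · μ(I(l)) μ(I(y)) ≤ μ(I(l ⌢ y)) ≤ 2 log 2 · μ(I(l)) μ(I(y))`.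
Induction on the number of blocks finishes the proof.
-/

open Real Set

lemma slope_log_mem_Icc {a b : ℝ} (ha : 0 < a) (hb : 0 < b) (hab : a ≠ b) :
    slope log a b ∈ Icc (max a b)⁻¹ (min a b)⁻¹ := by
  wlog hlt : a < b generalizing a b
  · rw [slope_comm, max_comm, min_comm]
    exact this hb ha hab.symm (lt_of_le_of_ne (not_lt.1 hlt) hab.symm)
  rw [max_eq_right hlt.le, min_eq_left hlt.le, slope_def_field, ← log_div hb.ne' ha.ne']
  have hba : 0 < b - a := sub_pos.2 hlt
  constructor
  · have := one_sub_inv_le_log_of_pos (div_pos hb ha)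
    rw [inv_div, one_sub_div hb.ne'] at this
    rwa [inv_eq_one_div, div_le_div_iff₀ hb hba, one_mul, ← div_le_iff₀ hb]
  · have := log_le_sub_one_of_pos (div_pos hb ha)
    rw [div_sub_one ha.ne'] at this
    rwa [inv_eq_one_div, div_le_div_iff₀ hba ha, one_mul, ← le_div_iff₀ ha]

section LinearFactors

variable {q q' r r' t : ℝ}

lemma integral_one_div_mul_linear (hq : 0 < q) (hq' : 0 ≤ q') (hr : 0 < r) (hr' : 0 ≤ r')
    (hD : q * r' - q' * r ≠ 0) :
    ∫ t in (0 : ℝ)..1, 1 / ((q + q' * t) * (r + r' * t)) =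
      slope log ((q + q') * r) (q * (r + r')) := by
  have hpos : ∀ t ∈ uIcc (0 : ℝ) 1, 0 < q + q' * t ∧ 0 < r + r' * t := fun t ht => by
    rw [uIcc_of_le zero_le_one] at ht
    have := ht.1
    exact ⟨by positivity, by positivity⟩
  have hderiv : ∀ t ∈ uIcc (0 : ℝ) 1, HasDerivAt
      (fun s => (log (r + r' * s) - log (q + q' * s)) / (q * r' - q' * r))
      (1 / ((q + q' * t) * (r + r' * t))) t := fun t ht => by
    obtain ⟨hQ, hR⟩ := hpos t ht
    have hQd : HasDerivAt (fun s => q + q' * s) q' t := by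
      simpa using ((hasDerivAt_id t).const_mul q').const_add q
    have hRd : HasDerivAt (fun s => r + r' * s) r' t := by
      simpa using ((hasDerivAt_id t).const_mul r').const_add r
    refine ((hRd.log hR.ne').sub (hQd.log hQ.ne')).div_const _ |>.congr_deriv ?_
    rw [div_sub_div _ _ hR.ne' hQ.ne',
      show r' * (q + q' * t) - (r + r' * t) * q' = q * r' - q' * r by ring]
    field_simp
  have hcont : ContinuousOn (fun t => 1 / ((q + q' * t) * (r + r' * t))) (uIcc 0 1) :=
    continuousOn_const.div (by fun_prop) fun t ht => by
      obtain ⟨hQ, hR⟩ := hpos t ht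
      positivity
  rw [intervalIntegral.integral_eq_sub_of_hasDerivAt hderiv hcont.intervalIntegrable,
    slope_def_field, log_mul (by positivity) (by positivity),
    log_mul (by positivity) (by positivity)]
  simp only [mul_zero, add_zero, mul_one]
  rw [div_sub_div_same]
  congr 1 <;> ring

lemma linear_mul_linear_le_min_mul (hq' : 0 ≤ q') (hqq' : q' ≤ q) (hr' : 0 ≤ r')
    (hrr' : r' ≤ r) (ht : t ∈ Icc 0 1) :
    (q + q' * t) * (r + r' * t) ≤ min ((q + q') * r) (q * (r + r')) * (1 + t) := by
  obtain ⟨ht0, ht1⟩ := ht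
  rw [min_mul_of_nonneg _ _ (by linarith)]
  have hQ : 0 ≤ q + q' * t := by nlinarith
  have hR : 0 ≤ r + r' * t := by nlinarith
  refine le_min ?_ ?_
  · calc (q + q' * t) * (r + r' * t) ≤ (q + q') * (r * (1 + t)) :=
          mul_le_mul (by nlinarith) (by nlinarith) hR (by nlinarith)
      _ = (q + q') * r * (1 + t) := by ring
  · calc (q + q' * t) * (r + r' * t) ≤ (q * (1 + t)) * (r + r') :=
          mul_le_mul (by nlinarith) (by nlinarith) hR (by nlinarith)
      _ = q * (r + r') * (1 + t) := by ring

lemma max_mul_le_two_mul_linear_mul_linear (hq' : 0 ≤ q') (hqq' : q' ≤ q) (hr' : 0 ≤ r')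
    (hrr' : r' ≤ r) (ht : t ∈ Icc 0 1) :
    max ((q + q') * r) (q * (r + r')) * (1 + t) ≤ 2 * ((q + q' * t) * (r + r' * t)) := by
  obtain ⟨ht0, ht1⟩ := ht
  rw [max_mul_of_nonneg _ _ (by linarith)]
  refine max_le ?_ ?_
  · calc (q + q') * r * (1 + t) = ((q + q') * (1 + t)) * r := by ring
      _ ≤ (2 * (q + q' * t)) * (r + r' * t) :=
          mul_le_mul (by nlinarith) (by nlinarith) (by nlinarith) (by nlinarith)
      _ = 2 * ((q + q' * t) * (r + r' * t)) := by ring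
  · calc q * (r + r') * (1 + t) = q * ((r + r') * (1 + t)) := by ring
      _ ≤ (q + q' * t) * (2 * (r + r' * t)) :=
          mul_le_mul (by nlinarith) (by nlinarith) (by nlinarith) (by nlinarith)
      _ = 2 * ((q + q' * t) * (r + r' * t)) := by ring

lemma slope_log_mul_density_le_density {c : ℝ} (hc : 0 < c) (hq : 0 < q) (hq' : 0 ≤ q')
    (hqq' : q' ≤ q) (hr : 0 < r) (hr' : 0 ≤ r') (hrr' : r' ≤ r) (hD : q * r' - q' * r ≠ 0)
    (ht : t ∈ Icc 0 1) :
    slope log ((q + q') * r) (q * (r + r')) * (1 / (c * (1 + t))) ≤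
        1 / (c * ((q + q' * t) * (r + r' * t))) ∧
      1 / (c * ((q + q' * t) * (r + r' * t))) ≤
        2 * slope log ((q + q') * r) (q * (r + r')) * (1 / (c * (1 + t))) := by
  have hne : (q + q') * r ≠ q * (r + r') := fun h => hD (by linear_combination -h)
  obtain ⟨hL₁, hL₂⟩ := slope_log_mem_Icc (by positivity) (by positivity) hne
  set L := slope log ((q + q') * r) (q * (r + r'))
  set A := min ((q + q') * r) (q * (r + r'))
  set B := max ((q + q') * r) (q * (r + r'))
  set X := (q + q' * t) * (r + r' * t)
  have hA : 0 < A := lt_min (by positivity) (by positivity)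
  have hB : 0 < B := hA.trans_le min_le_max
  have ht0 := ht.1
  have hX : 0 < X := by positivity
  have hlower : L * X ≤ 1 + t :=
    calc L * X ≤ A⁻¹ * (A * (1 + t)) :=
          mul_le_mul hL₂ (linear_mul_linear_le_min_mul hq' hqq' hr' hrr' ht) hX.le (by positivity)
      _ = 1 + t := inv_mul_cancel_left₀ hA.ne' _
  have hupper : 1 + t ≤ 2 * L * X :=
    calc 1 + t = B⁻¹ * (B * (1 + t)) := (inv_mul_cancel_left₀ hB.ne' _).symm
      _ ≤ L * (2 * X) :=
          mul_le_mul hL₁ (max_mul_le_two_mul_linear_mul_linear hq' hqq' hr' hrr' ht)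
            (by positivity) ((inv_pos.2 hB).le.trans hL₁)
      _ = 2 * L * X := by ring
  rw [mul_one_div, mul_one_div, div_le_div_iff₀ (by positivity) (by positivity),
    div_le_div_iff₀ (by positivity) (by positivity)]
  constructor <;> nlinarith

end LinearFactors

section QuasiMultiplicative

variable {α : Type*} {F : List α → ℝ} {P : List α → Prop} {c : ℝ}

theorem pow_mul_prod_le_flatten (hc : 0 ≤ c) (hF : ∀ l, P l → 0 ≤ F l)
    (h : ∀ l y, P l → c * F l * F y ≤ F (l ++ y)) {r : ℕ} (x : Fin (r + 1) → List α)
    (hx : ∀ i, P (x i)) : c ^ r * ∏ i, F (x i) ≤ F (List.ofFn x).flatten := by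
  induction r with
  | zero => simp
  | succ r ih =>
    rw [List.ofFn_succ, List.flatten_cons, Fin.prod_univ_succ]
    calc c ^ (r + 1) * (F (x 0) * ∏ i : Fin (r + 1), F (x i.succ))
        = c * F (x 0) * (c ^ r * ∏ i : Fin (r + 1), F (x i.succ)) := by ring
      _ ≤ c * F (x 0) * F (List.ofFn fun i : Fin (r + 1) => x i.succ).flatten :=
          mul_le_mul_of_nonneg_left (ih _ fun i => hx i.succ) (mul_nonneg hc (hF _ (hx 0)))
      _ ≤ _ := h _ _ (hx 0)

theorem flatten_le_pow_mul_prod (hc : 0 ≤ c) (hF : ∀ l, P l → 0 ≤ F l)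
    (h : ∀ l y, P l → F (l ++ y) ≤ c * F l * F y) {r : ℕ} (x : Fin (r + 1) → List α)
    (hx : ∀ i, P (x i)) : F (List.ofFn x).flatten ≤ c ^ r * ∏ i, F (x i) := by
  induction r with
  | zero => simp
  | succ r ih =>
    rw [List.ofFn_succ, List.flatten_cons, Fin.prod_univ_succ]
    calc F (x 0 ++ (List.ofFn fun i : Fin (r + 1) => x i.succ).flatten)
        ≤ c * F (x 0) * F (List.ofFn fun i : Fin (r + 1) => x i.succ).flatten := h _ _ (hx 0)
      _ ≤ c * F (x 0) * (c ^ r * ∏ i : Fin (r + 1), F (x i.succ)) :=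
          mul_le_mul_of_nonneg_left (ih _ fun i => hx i.succ) (mul_nonneg hc (hF _ (hx 0)))
      _ = c ^ (r + 1) * (F (x 0) * ∏ i : Fin (r + 1), F (x i.succ)) := by ring

end QuasiMultiplicative

lemma irrational_gaussMap {ω : ℝ} (h : Irrational ω) : Irrational (gaussMap ω) := by
  rw [gaussMap, ← Int.self_sub_floor, one_div]
  exact h.inv.sub_intCast _

lemma gaussMap_mem_Ioo {ω : ℝ} (h : Irrational ω) : gaussMap ω ∈ Ioo 0 1 :=
  ⟨Int.fract_pos.2 (by simpa using h.inv.ne_int _), Int.fract_lt_one _⟩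

lemma one_div_floor_add_gaussMap {ω : ℝ} (hω : 0 < ω) :
    1 / (⌊1 / ω⌋₊ + gaussMap ω) = ω := by
  rw [gaussMap, natCast_floor_eq_intCast_floor (by positivity), Int.floor_add_fract,
    one_div_one_div]

lemma gaussMap_one_div_add {a : ℕ} {t : ℝ} (ht : t ∈ Ico 0 1) :
    gaussMap (1 / (a + t)) = t := by
  rw [gaussMap, one_div_one_div, add_comm, Int.fract_add_natCast, Int.fract_eq_self.2 ht]

lemma floor_one_div_one_div_add {a : ℕ} {t : ℝ} (ht : t ∈ Ico 0 1) :
    ⌊1 / (1 / (a + t))⌋₊ = a := by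
  rw [one_div_one_div, add_comm, Nat.floor_add_natCast ht.1, Nat.floor_eq_zero.2 ht.2, zero_add]

lemma mem_cylinderL_cons {a : ℕ} {y : List ℕ} {ω : ℝ} :
    ω ∈ cylinderL (a :: y) ↔ ω ∈ Ioo 0 1 ∧ Irrational ω ∧ ⌊1 / ω⌋₊ = a ∧
      ∀ i : Fin y.length, cfDigit i (gaussMap ω) = y.get i := by
  simp only [cylinderL, mem_ofPred_eq, List.length_cons, Fin.forall_fin_succ]
  rfl

lemma cylinderL_cons {a : ℕ} (ha : 1 ≤ a) (y : List ℕ) :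
    cylinderL (a :: y) = (fun t : ℝ => 1 / (a + t)) '' cylinderL y := by
  ext ω
  rw [mem_cylinderL_cons]
  constructor
  · rintro ⟨hω, hirr, rfl, hdigits⟩
    exact ⟨gaussMap ω, ⟨gaussMap_mem_Ioo hirr, irrational_gaussMap hirr, hdigits⟩,
      one_div_floor_add_gaussMap hω.1⟩
  · rintro ⟨t, ⟨ht, hirr, hdigits⟩, rfl⟩
    have ha' : (1 : ℝ) ≤ a := by exact_mod_cast ha
    refine ⟨⟨by have := ht.1; positivity, by rw [div_lt_one] <;> linarith [ht.1]⟩, ?_,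
      floor_one_div_one_div_add (Ioo_subset_Ico_self ht), ?_⟩
    · simpa using (hirr.natCast_add a).inv
    · rwa [gaussMap_one_div_add (Ioo_subset_Ico_self ht)]

noncomputable def mobius (p p' q q' t : ℝ) : ℝ := (p + p' * t) / (q + q' * t)

/-- `p / q` and `p' / q'` stand for consecutive convergents `p_n / q_n` and
`p_{n-1} / q_{n-1}` of a block of partial quotients. -/
structure IsConvergentPair (p p' q q' : ℝ) : Prop where
  q_pos : 0 < q
  q'_nonneg : 0 ≤ q'
  p_nonneg : 0 ≤ p
  p'_nonneg : 0 ≤ p'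
  q'_le_q : q' ≤ q
  q'_add_p'_le : q' + p' ≤ q + p
  abs_det : |p * q' - p' * q| = 1

lemma isConvergentPair_id : IsConvergentPair 0 1 1 0 :=
  ⟨one_pos, le_rfl, le_rfl, zero_le_one, zero_le_one, by norm_num, by norm_num⟩

lemma mobius_id : mobius 0 1 1 0 = id := by
  ext t; simp [mobius]

namespace IsConvergentPair

variable {p p' q q' : ℝ}

lemma cons (h : IsConvergentPair p p' q q') {a : ℝ} (ha : 1 ≤ a) :
    IsConvergentPair q q' (a * q + p) (a * q' + p') where
  q_pos := by nlinarith [h.q_pos, h.p_nonneg]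
  q'_nonneg := by nlinarith [h.q'_nonneg, h.p'_nonneg]
  p_nonneg := h.q_pos.le
  p'_nonneg := h.q'_nonneg
  q'_le_q := by nlinarith [h.q'_le_q, h.q'_add_p'_le]
  q'_add_p'_le := by nlinarith [h.q'_le_q, h.q'_add_p'_le]
  abs_det := by rw [← h.abs_det, ← abs_neg]; ring_nf

lemma denom_pos (h : IsConvergentPair p p' q q') {t : ℝ} (ht : 0 ≤ t) : 0 < q + q' * t := by
  have := h.q_pos; have := h.q'_nonneg; positivity

lemma q_add_p_pos (h : IsConvergentPair p p' q q') : 0 < q + p := by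
  linarith [h.q_pos, h.p_nonneg]

lemma q'_add_p'_nonneg (h : IsConvergentPair p p' q q') : 0 ≤ q' + p' := by
  linarith [h.q'_nonneg, h.p'_nonneg]

lemma det_ne_zero (h : IsConvergentPair p p' q q') : q * (q' + p') - q' * (q + p) ≠ 0 := by
  intro h0
  have : p * q' - p' * q = 0 := by linear_combination -h0
  simpa [this] using h.abs_det

lemma one_div_add_mobius (h : IsConvergentPair p p' q q') (a : ℝ) {t : ℝ} (ht : 0 ≤ t) :
    1 / (a + mobius p p' q q' t) = mobius q q' (a * q + p) (a * q' + p') t := by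
  rw [mobius, mobius, add_div' _ _ _ (h.denom_pos ht).ne', one_div_div]
  congr 1; ring

lemma hasDerivAt_mobius (h : IsConvergentPair p p' q q') {t : ℝ} (ht : 0 ≤ t) :
    HasDerivAt (mobius p p' q q') ((p' * q - p * q') / (q + q' * t) ^ 2) t := by
  have hP : HasDerivAt (fun s => p + p' * s) p' t := by
    simpa using ((hasDerivAt_id t).const_mul p').const_add p
  have hQ : HasDerivAt (fun s => q + q' * s) q' t := by
    simpa using ((hasDerivAt_id t).const_mul q').const_add q
  exact (hP.div hQ (h.denom_pos ht).ne').congr_deriv (by ring)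

lemma injOn_mobius (h : IsConvergentPair p p' q q') : InjOn (mobius p p' q q') (Ici 0) := by
  intro s hs t ht hst
  rw [mobius, mobius, div_eq_div_iff (h.denom_pos hs).ne' (h.denom_pos ht).ne'] at hst
  have : (q * (q' + p') - q' * (q + p)) * (s - t) = 0 := by linear_combination hst
  linarith [(mul_eq_zero.1 this).resolve_left h.det_ne_zero]

lemma integral_image_mobius (h : IsConvergentPair p p' q q') {S : Set ℝ} (hS : MeasurableSet S)
    (hsub : S ⊆ Ici 0) :
    ∫ t in mobius p p' q q' '' S, 1 / (log 2 * (1 + t)) =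
      ∫ t in S, 1 / (log 2 * ((q + q' * t) * ((q + p) + (q' + p') * t))) := by
  rw [integral_image_eq_integral_abs_deriv_smul hS
    (fun t ht => (h.hasDerivAt_mobius (hsub ht)).hasDerivWithinAt) (h.injOn_mobius.mono hsub)]
  refine setIntegral_congr_fun hS fun t ht => ?_
  have hQ := h.denom_pos (hsub ht)
  have habs : |p' * q - p * q'| = 1 := by rw [abs_sub_comm, mul_comm p', mul_comm q, h.abs_det]
  simp only [smul_eq_mul, abs_div, habs, abs_pow, abs_of_pos hQ, mobius]
  rw [one_add_div hQ.ne']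
  field_simp
  ring

end IsConvergentPair

lemma cylinderL_nil_append (y : List ℕ) :
    cylinderL ([] ++ y) = mobius 0 1 1 0 '' cylinderL y := by
  rw [mobius_id, image_id, List.nil_append]

lemma exists_cylinderL_append_eq_image (l : List ℕ) (hl : ∀ a ∈ l, 1 ≤ a) :
    ∃ p p' q q', IsConvergentPair p p' q q' ∧
      ∀ y, cylinderL (l ++ y) = mobius p p' q q' '' cylinderL y := by
  induction l with
  | nil => exact ⟨0, 1, 1, 0, isConvergentPair_id, cylinderL_nil_append⟩
  | cons a l ih =>
    have ha : (1 : ℝ) ≤ a := by exact_mod_cast hl a List.mem_cons_self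
    obtain ⟨p, p', q, q', h, hrep⟩ := ih fun b hb => hl b (List.mem_cons_of_mem a hb)
    refine ⟨q, q', a * q + p, a * q' + p', h.cons ha, fun y => ?_⟩
    rw [List.cons_append, cylinderL_cons (by exact_mod_cast ha), hrep, ← image_comp]
    exact image_congr fun t ht => h.one_div_add_mobius a ht.1.1.le

lemma measurable_gaussMap : Measurable gaussMap :=
  (measurable_const.div measurable_id).fract

lemma measurable_cfDigit (n : ℕ) : Measurable (cfDigit n) :=
  (measurable_const.div (measurable_gaussMap.iterate n)).nat_floor

lemma measurableSet_cylinderL (l : List ℕ) : MeasurableSet (cylinderL l) := by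
  refine measurableSet_Ioo.inter (IsGδ.setOfPred_irrational.measurableSet.inter ?_)
  exact Measurable.setOf <| .forall fun i =>
    (measurableSet_eq_fun (measurable_cfDigit i) measurable_const).mem

lemma cylinderL_subset_Ioo (l : List ℕ) : cylinderL l ⊆ Ioo 0 1 := fun _ h => h.1

lemma cylinderL_nil_ae_eq : cylinderL [] =ᵐ[volume] Ioo (0 : ℝ) 1 := by
  have : cylinderL [] = Ioo 0 1 \ range ((↑) : ℚ → ℝ) := by
    ext ω; simp [cylinderL, Irrational]
  rw [this]
  exact sdiff_null_ae_eq_self ((countable_range _).measure_zero _)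

lemma gaussMeasure_real_eq_integral {A : Set ℝ} (hA : MeasurableSet A) (hsub : A ⊆ Ioo 0 1) :
    gaussMeasure.real A = ∫ t in A, 1 / (log 2 * (1 + t)) := by
  rw [measureReal_def, gaussMeasure, withDensity_apply _ hA, Measure.restrict_restrict hA,
    inter_eq_self_of_subset_left hsub, integral_eq_lintegral_of_nonneg_ae]
  · filter_upwards [ae_restrict_mem hA] with t ht
    have := (hsub ht).1
    have := log_pos one_lt_two
    positivity
  · exact (measurable_const.div
      (measurable_const.mul (measurable_const.add measurable_id))).aestronglyMeasurable

lemma continuousOn_gaussDensity : ContinuousOn (fun t : ℝ => 1 / (log 2 * (1 + t))) (Icc 0 1) :=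
  continuousOn_const.div (by fun_prop) fun t ht => by
    have := ht.1; have := log_pos one_lt_two; positivity

lemma integrableOn_cylinderL {f : ℝ → ℝ} (hf : ContinuousOn f (Icc 0 1)) (l : List ℕ) :
    IntegrableOn f (cylinderL l) :=
  hf.integrableOn_Icc.mono_set ((cylinderL_subset_Ioo l).trans Ioo_subset_Icc_self)

namespace IsConvergentPair

variable {p p' q q' : ℝ} {l : List ℕ}

lemma continuousOn_density (h : IsConvergentPair p p' q q') :
    ContinuousOn (fun t => 1 / (log 2 * ((q + q' * t) * ((q + p) + (q' + p') * t)))) (Icc 0 1) :=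
  continuousOn_const.div (by fun_prop) fun t ht => by
    have := h.denom_pos ht.1; have := h.q_add_p_pos; have := h.q'_add_p'_nonneg; have := ht.1
    have := log_pos one_lt_two; positivity

lemma gaussMeasure_real_cylinderL_append (h : IsConvergentPair p p' q q')
    (hl : ∀ y, cylinderL (l ++ y) = mobius p p' q q' '' cylinderL y) (y : List ℕ) :
    gaussMeasure.real (cylinderL (l ++ y)) =
      ∫ t in cylinderL y, 1 / (log 2 * ((q + q' * t) * ((q + p) + (q' + p') * t))) := by
  rw [gaussMeasure_real_eq_integral (measurableSet_cylinderL _) (cylinderL_subset_Ioo _), hl,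
    h.integral_image_mobius (measurableSet_cylinderL y) fun t ht =>
      (cylinderL_subset_Ioo y ht).1.le]

lemma gaussMeasure_real_cylinderL (h : IsConvergentPair p p' q q')
    (hl : ∀ y, cylinderL (l ++ y) = mobius p p' q q' '' cylinderL y) :
    gaussMeasure.real (cylinderL l) =
      slope log ((q + q') * (q + p)) (q * ((q + p) + (q' + p'))) / log 2 := by
  have := h.gaussMeasure_real_cylinderL_append hl []
  rw [List.append_nil] at this
  rw [this, setIntegral_congr_set cylinderL_nil_ae_eq, ← integral_Ioc_eq_integral_Ioo,
    ← intervalIntegral.integral_of_le zero_le_one,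
    ← integral_one_div_mul_linear h.q_pos h.q'_nonneg h.q_add_p_pos h.q'_add_p'_nonneg
      h.det_ne_zero,
    ← intervalIntegral.integral_div]
  simp only [div_div, mul_comm]

end IsConvergentPair

theorem gaussMeasure_real_cylinderL_append_bounds {l : List ℕ} (hl : ∀ a ∈ l, 1 ≤ a)
    (y : List ℕ) :
    log 2 * gaussMeasure.real (cylinderL l) * gaussMeasure.real (cylinderL y) ≤
        gaussMeasure.real (cylinderL (l ++ y)) ∧
      gaussMeasure.real (cylinderL (l ++ y)) ≤
        2 * log 2 * gaussMeasure.real (cylinderL l) * gaussMeasure.real (cylinderL y) := by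
  obtain ⟨p, p', q, q', h, hrep⟩ := exists_cylinderL_append_eq_image l hl
  have hlog : 0 < log 2 := log_pos one_lt_two
  have hμl : log 2 * gaussMeasure.real (cylinderL l) =
      slope log ((q + q') * (q + p)) (q * ((q + p) + (q' + p'))) := by
    rw [h.gaussMeasure_real_cylinderL hrep]
    field_simp
  have hdensity : ∀ t ∈ cylinderL y, _ := fun t ht =>
    slope_log_mul_density_le_density hlog h.q_pos h.q'_nonneg h.q'_le_q h.q_add_p_pos
      h.q'_add_p'_nonneg h.q'_add_p'_le h.det_ne_zero
      (Ioo_subset_Icc_self (cylinderL_subset_Ioo y ht))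
  rw [h.gaussMeasure_real_cylinderL_append hrep, mul_assoc 2, hμl,
    gaussMeasure_real_eq_integral (measurableSet_cylinderL y) (cylinderL_subset_Ioo y),
    ← integral_const_mul, ← integral_const_mul]
  have hf := integrableOn_cylinderL continuousOn_gaussDensity y
  have hg := integrableOn_cylinderL h.continuousOn_density y
  exact ⟨setIntegral_mono_on (hf.const_mul _) hg (measurableSet_cylinderL y)
      fun t ht => (hdensity t ht).1,
    setIntegral_mono_on hg (hf.const_mul _) (measurableSet_cylinderL y)
      fun t ht => (hdensity t ht).2⟩

lemma gaussMeasure_real_cylinderL_pos {l : List ℕ} (hl : ∀ a ∈ l, 1 ≤ a) :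
    0 < gaussMeasure.real (cylinderL l) := by
  obtain ⟨p, p', q, q', h, hrep⟩ := exists_cylinderL_append_eq_image l hl
  rw [h.gaussMeasure_real_cylinderL hrep]
  have hne : (q + q') * (q + p) ≠ q * ((q + p) + (q' + p')) := fun h0 =>
    h.det_ne_zero (by linear_combination -h0)
  have := h.q_pos; have := h.q'_nonneg; have := h.q_add_p_pos; have := h.q'_add_p'_nonneg
  have hL := (slope_log_mem_Icc (by positivity) (by positivity) hne).1
  exact div_pos ((inv_pos.2 (lt_max_of_lt_left (by positivity))).trans_le hL) (log_pos one_lt_two)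

lemma gaussMeasure_real_cylinderL_nil : gaussMeasure.real (cylinderL []) = 1 := by
  rw [isConvergentPair_id.gaussMeasure_real_cylinderL cylinderL_nil_append, slope_def_field]
  norm_num

theorem gauss_measure_quasi_independence_multi_general
    (r : ℕ) (x : Fin r → List ℕ)
    (hpos : ∀ i, ∀ a ∈ x i, 1 ≤ a) :
    (Real.log 2) ^ (r - 1) ≤
      (gaussMeasure (cylinderL (List.ofFn x).flatten)).toReal /
        ∏ i, (gaussMeasure (cylinderL (x i))).toReal ∧
    (gaussMeasure (cylinderL (List.ofFn x).flatten)).toReal /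
        ∏ i, (gaussMeasure (cylinderL (x i))).toReal
      ≤ (2 * Real.log 2) ^ (r - 1) := by
  simp only [← measureReal_def]
  have hprod : 0 < ∏ i, gaussMeasure.real (cylinderL (x i)) :=
    Finset.prod_pos fun i _ => gaussMeasure_real_cylinderL_pos (hpos i)
  rw [le_div_iff₀ hprod, div_le_iff₀ hprod]
  cases r with
  | zero => simp [gaussMeasure_real_cylinderL_nil]
  | succ r =>
    have hlog : 0 ≤ log 2 := (log_pos one_lt_two).le
    exact ⟨pow_mul_prod_le_flatten hlog (fun _ _ => measureReal_nonneg)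
        (fun l y hl => (gaussMeasure_real_cylinderL_append_bounds hl y).1) x hpos,
      flatten_le_pow_mul_prod (by positivity) (fun _ _ => measureReal_nonneg)
        (fun l y hl => (gaussMeasure_real_cylinderL_append_bounds hl y).2) x hpos⟩

theorem gauss_measure_quasi_independence_multi
    (r : ℕ) (hr : 2 ≤ r) (x : Fin r → List ℕ)
    (hne : ∀ i, x i ≠ []) (hpos : ∀ i, ∀ a ∈ x i, 1 ≤ a) :
    (Real.log 2) ^ (r - 1) ≤
      (gaussMeasure (cylinderL (List.ofFn x).flatten)).toReal /
        ∏ i, (gaussMeasure (cylinderL (x i))).toReal ∧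
    (gaussMeasure (cylinderL (List.ofFn x).flatten)).toReal /
        ∏ i, (gaussMeasure (cylinderL (x i))).toReal
      ≤ (2 * Real.log 2) ^ (r - 1) :=
  gauss_measure_quasi_independence_multi_general r x hpos
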